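/- If U⁻ and U⁺ are closed, disjoint, non-trivial conical intervals of future-pointing lightlike rays, then the set C(U⁻,U⁺) = {v ∈ R^{2,1} : ⟨v,u⟩ > 0 for all unit-spacelike u with x⁻(u) ∈ U⁻ and x⁺(u) ∈ U⁺} equals the set of positive linear combinations of x⁺(U⁻), x⁻(U⁺), -x⁺(U⁺), and -x⁻(U⁻). -/
import Mathlib


noncomputable section

/-- The Lorentzian bilinear form of signature (2,1) on ℝ³. -/
def ldot (x y : Fin 3 → ℝ) : ℝ := x 0 * y 0 + x 1 * y 1 - x 2 * y 2

/-- The Lorentz cross-product, the unique bilinear map with ⟨u, v ⊠ w⟩ = det[u v w]. -/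
def lcross (v w : Fin 3 → ℝ) : Fin 3 → ℝ :=
  ![v 1 * w 2 - v 2 * w 1, v 2 * w 0 - v 0 * w 2, -(v 0 * w 1 - v 1 * w 0)]

/-- Determinant of the 3×3 matrix with columns x, y, z. -/
def det3 (x y z : Fin 3 → ℝ) : ℝ := (Matrix.transpose (Matrix.of ![x, y, z])).det

/-- A future-pointing lightlike vector of Euclidean length one (representing a
future-pointing lightlike ray). -/
def FutureUnitNull (x : Fin 3 → ℝ) : Prop :=
  ldot x x = 0 ∧ x 2 > 0 ∧ x 0 ^ 2 + x 1 ^ 2 + x 2 ^ 2 = 1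

/-- The closed conical interval with boundary rays spanned by a and b, ordered so that
⟨x, a ⊠ b⟩ ≥ 0 on the interval (a = x⁻(U), b = x⁺(U)). -/
def arc (a b : Fin 3 → ℝ) : Set (Fin 3 → ℝ) :=
  {x | FutureUnitNull x ∧ 0 ≤ ldot x (lcross a b)}

/-- (u, xm, xp) is a null frame: u is unit-spacelike, xm = x⁻(u) and xp = x⁺(u) are the
future-pointing Euclidean-unit lightlike vectors spanning u^⊥ ∩ lightcone, ordered so
that (u, xm, xp) is positively oriented. -/
def IsNullFramePair (u xm xp : Fin 3 → ℝ) : Prop :=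
  ldot u u = 1 ∧ FutureUnitNull xm ∧ FutureUnitNull xp ∧
  ldot xm u = 0 ∧ ldot xp u = 0 ∧ det3 u xm xp > 0

/-- The cone C(U⁻, U⁺): vectors pairing positively with every unit-spacelike u whose
null frame satisfies x⁻(u) ∈ U⁻ and x⁺(u) ∈ U⁺. -/
def coneC (Um Up : Set (Fin 3 → ℝ)) : Set (Fin 3 → ℝ) :=
  {v | ∀ u xm xp : Fin 3 → ℝ, IsNullFramePair u xm xp → xm ∈ Um → xp ∈ Up → 0 < ldot v u}

/- ======================= auxiliary material ======================= -/

lemma det3_eq (x y z : Fin 3 → ℝ) : det3 x y z =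
    x 0 * (y 1 * z 2 - y 2 * z 1) - y 0 * (x 1 * z 2 - x 2 * z 1)
      + z 0 * (x 1 * y 2 - x 2 * y 1) := by
  simp [det3, Matrix.det_fin_three, Matrix.transpose]; ring

lemma ldot_lcross (x a b : Fin 3 → ℝ) : ldot x (lcross a b) = det3 x a b := by
  simp only [ldot, lcross, det3_eq]
  simp; ring

lemma sinsum_aux (u w : ℝ) :
    Real.sin (2*u) + Real.sin (2*w) - Real.sin (2*(u+w))
      = 4 * Real.sin u * Real.sin w * Real.sin (u+w) := by
  rw [Real.sin_two_mul, Real.sin_two_mul, Real.sin_two_mul, Real.sin_add, Real.cos_add]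
  linear_combination (-2*Real.sin u*Real.cos u)*(Real.sin_sq_add_cos_sq w)
    + (-2*Real.sin w*Real.cos w)*(Real.sin_sq_add_cos_sq u)

lemma sinsum (a b c : ℝ) :
    Real.sin (b - a) + Real.sin (c - b) + Real.sin (a - c)
      = 4 * Real.sin ((b - a)/2) * Real.sin ((c - b)/2) * Real.sin ((c - a)/2) := by
  have h := sinsum_aux ((b-a)/2) ((c-b)/2)
  have h1 : 2 * ((b-a)/2) = b - a := by ring
  have h2 : 2 * ((c-b)/2) = c - b := by ring
  have h3 : 2 * ((b-a)/2 + (c-b)/2) = c - a := by ring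
  have h4 : (b-a)/2 + (c-b)/2 = (c-a)/2 := by ring
  rw [h1, h2, h3, h4] at h
  have h5 : a - c = -(c-a) := by ring
  rw [h5, Real.sin_neg]; linarith

/-- The standard future unit null vector at angle θ. -/
def pt (θ : ℝ) : Fin 3 → ℝ :=
  ![Real.cos θ * (Real.sqrt 2)⁻¹, Real.sin θ * (Real.sqrt 2)⁻¹, (Real.sqrt 2)⁻¹]

lemma r_pos : (0:ℝ) < (Real.sqrt 2)⁻¹ := by positivity

lemma r_sq : ((Real.sqrt 2)⁻¹ : ℝ) ^ 2 = 2⁻¹ := by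
  rw [inv_pow, Real.sq_sqrt (by norm_num : (0:ℝ) ≤ 2)]

lemma fun_pt (θ : ℝ) : FutureUnitNull (pt θ) := by
  have h := Real.sin_sq_add_cos_sq θ
  refine ⟨?_, by simp [pt, r_pos], ?_⟩ <;>
  · simp [pt, ldot]
    nlinarith [r_sq]

lemma det3_pt (a b c : ℝ) : det3 (pt a) (pt b) (pt c) =
    ((Real.sqrt 2)⁻¹)^3 *
      (4 * Real.sin ((b - a)/2) * Real.sin ((c - b)/2) * Real.sin ((c - a)/2)) := by
  rw [← sinsum]
  simp only [det3_eq, pt]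
  simp [Real.sin_sub]
  ring

lemma pt_exists (x : Fin 3 → ℝ) (hx : FutureUnitNull x) : ∃ θ, x = pt θ := by
  obtain ⟨h0, h2, h1⟩ := hx
  have hr : x 2 = (Real.sqrt 2)⁻¹ := by
    have hsq : x 2 ^ 2 = 2⁻¹ := by simp [ldot] at h0; nlinarith
    nlinarith [r_pos, h2, r_sq]
  have hcs : (x 0 * Real.sqrt 2) ^ 2 + (x 1 * Real.sqrt 2) ^ 2 = 1 := by
    have hs : Real.sqrt 2 ^ 2 = 2 := Real.sq_sqrt (by norm_num)
    simp [ldot] at h0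
    nlinarith [r_sq, hr]
  set c := x 0 * Real.sqrt 2 with hc
  set s := x 1 * Real.sqrt 2 with hs
  have hc1 : -1 ≤ c := by nlinarith [sq_nonneg s]
  have hc2 : c ≤ 1 := by nlinarith [sq_nonneg s]
  have key : ∃ θ, Real.cos θ = c ∧ Real.sin θ = s := by
    rcases le_or_gt 0 s with h | h
    · refine ⟨Real.arccos c, Real.cos_arccos hc1 hc2, ?_⟩
      rw [Real.sin_arccos, show (1 : ℝ) - c^2 = s^2 by linarith]
      exact (Real.sqrt_sq h)
    · refine ⟨-Real.arccos c, by rw [Real.cos_neg]; exact Real.cos_arccos hc1 hc2, ?_⟩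
      rw [Real.sin_neg, Real.sin_arccos, show (1 : ℝ) - c^2 = s^2 by linarith]
      rw [Real.sqrt_sq_eq_abs, abs_of_neg h]; ring
  obtain ⟨θ, hcos, hsin⟩ := key
  refine ⟨θ, ?_⟩
  funext i
  have h2ne : Real.sqrt 2 ≠ 0 := by positivity
  fin_cases i <;> simp [pt, hr]
  · rw [hcos, hc]; field_simp
  · rw [hsin, hs]; field_simp

lemma pt_sub_period (θ : ℝ) (k : ℤ) : pt (θ - 2*Real.pi*k) = pt θ := by
  unfold pt
  rw [show θ - 2*Real.pi*(k:ℝ) = θ + ((-k : ℤ):ℝ) * (2*Real.pi) by push_cast; ring]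
  rw [Real.cos_add_int_mul_two_pi, Real.sin_add_int_mul_two_pi]

lemma pt_inj {α β : ℝ} (h : pt α = pt β) (h1 : -(2*Real.pi) < α - β) (h2 : α - β < 2*Real.pi) :
    α = β := by
  have hc : Real.cos α = Real.cos β := by
    have := congrFun h 0
    simp only [pt, Matrix.cons_val_zero] at this
    exact mul_right_cancel₀ (ne_of_gt r_pos) this
  have hs : Real.sin α = Real.sin β := by
    have := congrFun h 1
    simp only [pt, Matrix.cons_val_one, Matrix.head_cons] at this
    exact mul_right_cancel₀ (ne_of_gt r_pos) this
  have hone : Real.cos (α - β) = 1 := by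
    rw [Real.cos_sub, hc, hs]
    nlinarith [Real.sin_sq_add_cos_sq β]
  have := (Real.cos_eq_one_iff_of_lt_of_lt h1 h2).mp hone
  linarith

lemma reduce_angle (θ base : ℝ) : ∃ φ, pt φ = pt θ ∧ base ≤ φ ∧ φ < base + 2*Real.pi := by
  have h2π : (0:ℝ) < 2*Real.pi := by linarith [Real.pi_pos]
  refine ⟨θ - 2*Real.pi*⌊(θ - base)/(2*Real.pi)⌋, pt_sub_period _ _, ?_, ?_⟩
  · have h := Int.floor_le ((θ - base)/(2*Real.pi))
    have h' := (le_div_iff₀ h2π).mp h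
    linarith
  · have h := Int.lt_floor_add_one ((θ - base)/(2*Real.pi))
    have h' := (div_lt_iff₀ h2π).mp h
    linarith

/- sine-of-half-angle sign lemmas -/
lemma sinh_pos {x : ℝ} (h1 : 0 < x) (h2 : x < 2*Real.pi) : 0 < Real.sin (x/2) :=
  Real.sin_pos_of_pos_of_lt_pi (by linarith) (by linarith)

lemma sinh_nonneg {x : ℝ} (h1 : 0 ≤ x) (h2 : x ≤ 2*Real.pi) : 0 ≤ Real.sin (x/2) :=
  Real.sin_nonneg_of_nonneg_of_le_pi (by linarith) (by linarith)

lemma sinh_neg {x : ℝ} (h1 : -(2*Real.pi) < x) (h2 : x < 0) : Real.sin (x/2) < 0 := by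
  have := sinh_pos (x := -x) (by linarith) (by linarith)
  rw [show (-x)/2 = -(x/2) by ring, Real.sin_neg] at this
  linarith

lemma sinh_nonpos {x : ℝ} (h1 : -(2*Real.pi) ≤ x) (h2 : x ≤ 0) : Real.sin (x/2) ≤ 0 := by
  have := sinh_nonneg (x := -x) (by linarith) (by linarith)
  rw [show (-x)/2 = -(x/2) by ring, Real.sin_neg] at this
  linarith

/-- arc membership in terms of angles. -/
lemma arc_mem_iff {α β θ : ℝ} (h1 : 0 < α - β) (h2 : α - β < 2*Real.pi)
    (h3 : β ≤ θ) (h4 : θ < β + 2*Real.pi) :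
    pt θ ∈ arc (pt α) (pt β) ↔ θ ≤ α := by
  have hK : (0:ℝ) < ((Real.sqrt 2)⁻¹)^3 := by positivity
  have hdet : ldot (pt θ) (lcross (pt α) (pt β)) =
      ((Real.sqrt 2)⁻¹)^3 *
        (4 * Real.sin ((α - θ)/2) * Real.sin ((β - α)/2) * Real.sin ((β - θ)/2)) := by
    rw [ldot_lcross, det3_pt]
  have hS2 : Real.sin ((β - α)/2) < 0 := sinh_neg (by linarith) (by linarith)
  constructor
  · intro hmem
    by_contra hgt
    push_neg at hgt
    have hS1 : Real.sin ((α - θ)/2) < 0 := sinh_neg (by linarith) (by linarith)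
    have hS3 : Real.sin ((β - θ)/2) < 0 := sinh_neg (by linarith) (by linarith)
    have hp : 0 < Real.sin ((α - θ)/2) * Real.sin ((β - α)/2) := mul_pos_of_neg_of_neg hS1 hS2
    have hn : Real.sin ((α - θ)/2) * Real.sin ((β - α)/2) * Real.sin ((β - θ)/2) < 0 :=
      mul_neg_of_pos_of_neg hp hS3
    have := hmem.2
    rw [hdet] at this
    nlinarith
  · intro hle
    refine ⟨fun_pt θ, ?_⟩
    rw [hdet]
    have hS1 : 0 ≤ Real.sin ((α - θ)/2) := sinh_nonneg (by linarith) (by linarith)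
    have hS3 : Real.sin ((β - θ)/2) ≤ 0 := sinh_nonpos (by linarith) (by linarith)
    have hp : 0 ≤ Real.sin ((β - α)/2) * Real.sin ((β - θ)/2) := by
      nlinarith
    nlinarith [mul_nonneg hS1 hp]

/- facts about future unit null vectors -/
lemma fun_facts {x : Fin 3 → ℝ} (hx : FutureUnitNull x) :
    x 2 = (Real.sqrt 2)⁻¹ ∧ x 0 ^ 2 + x 1 ^ 2 = 2⁻¹ := by
  obtain ⟨h0, h2, h1⟩ := hx
  simp only [ldot] at h0
  have hsq : x 2 ^ 2 = 2⁻¹ := by nlinarith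
  have hr := r_sq
  have rp := r_pos
  constructor
  · nlinarith
  · nlinarith

lemma ldot_null_nonpos {x y : Fin 3 → ℝ} (hx : FutureUnitNull x) (hy : FutureUnitNull y) :
    ldot x y ≤ 0 := by
  obtain ⟨hx2, hx01⟩ := fun_facts hx
  obtain ⟨hy2, hy01⟩ := fun_facts hy
  simp only [ldot, hx2, hy2]
  have hrr : ((Real.sqrt 2)⁻¹:ℝ) * (Real.sqrt 2)⁻¹ = 2⁻¹ := by
    rw [← sq, r_sq]
  nlinarith [sq_nonneg (x 0 * y 1 - x 1 * y 0), sq_nonneg (x 0 * y 0 + x 1 * y 1 - 2⁻¹), hrr]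

lemma ldot_null_eq {x y : Fin 3 → ℝ} (hx : FutureUnitNull x) (hy : FutureUnitNull y)
    (h : ldot x y = 0) : x = y := by
  obtain ⟨hx2, hx01⟩ := fun_facts hx
  obtain ⟨hy2, hy01⟩ := fun_facts hy
  simp only [ldot, hx2, hy2] at h
  have hrr : ((Real.sqrt 2)⁻¹:ℝ) * (Real.sqrt 2)⁻¹ = 2⁻¹ := by
    rw [← sq, r_sq]
  have h0 : x 0 = y 0 := by nlinarith [sq_nonneg (x 0 - y 0), sq_nonneg (x 1 - y 1)]
  have h1 : x 1 = y 1 := by nlinarith [sq_nonneg (x 0 - y 0), sq_nonneg (x 1 - y 1)]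
  funext i; fin_cases i
  · exact h0
  · exact h1
  · show x 2 = y 2
    rw [hx2, hy2]

lemma ldot_null_neg {x y : Fin 3 → ℝ} (hx : FutureUnitNull x) (hy : FutureUnitNull y)
    (h : x ≠ y) : ldot x y < 0 :=
  lt_of_le_of_ne (ldot_null_nonpos hx hy) (fun h0 => h (ldot_null_eq hx hy h0))

/-- Gram-determinant identity: a pure polynomial identity. -/
lemma det_mul_det (v u x y : Fin 3 → ℝ) :
    det3 v x y * det3 u x y =
      -(ldot v u * (ldot x x * ldot y y - ldot x y * ldot y x)
        - ldot v x * (ldot x u * ldot y y - ldot x y * ldot y u)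
        + ldot v y * (ldot x u * ldot y x - ldot x x * ldot y u)) := by
  simp only [det3_eq, ldot]; ring

lemma frame_eval {u xm xp : Fin 3 → ℝ} (h : IsNullFramePair u xm xp) (v : Fin 3 → ℝ) :
    ldot v u * (- ldot xm xp) = det3 v xm xp ∧ ldot xm xp < 0 := by
  obtain ⟨huu, hxm, hxp, hmu, hpu, hdet⟩ := h
  have hxmxm : ldot xm xm = 0 := hxm.1
  have hxpxp : ldot xp xp = 0 := hxp.1
  have hsymm : ldot xp xm = ldot xm xp := by simp only [ldot]; ring
  have h1 := det_mul_det u u xm xp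
  have hux : ldot u xm = 0 := by simp only [ldot] at hmu ⊢; linarith [hmu]
  have huy : ldot u xp = 0 := by simp only [ldot] at hpu ⊢; linarith [hpu]
  rw [hxmxm, hxpxp, hmu, hpu, hux, huy, huu, hsymm] at h1
  have h1' : det3 u xm xp * det3 u xm xp = ldot xm xp * ldot xm xp := by linarith [h1]
  have hmne : ldot xm xp ≠ 0 := by
    intro h0; rw [h0] at h1'; nlinarith
  have hmlt : ldot xm xp < 0 := lt_of_le_of_ne (ldot_null_nonpos hxm hxp) hmne
  have hdu : det3 u xm xp = - ldot xm xp := by nlinarith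
  refine ⟨?_, hmlt⟩
  have h2 := det_mul_det v u xm xp
  rw [hxmxm, hxpxp, hmu, hpu, hsymm] at h2
  have h2' : det3 v xm xp * det3 u xm xp = ldot xm xp * ldot xm xp * ldot v u := by linarith [h2]
  rw [hdu] at h2'
  nlinarith [h2']

lemma frame_exists {xm xp : Fin 3 → ℝ} (hxm : FutureUnitNull xm) (hxp : FutureUnitNull xp)
    (hne : xm ≠ xp) : IsNullFramePair ((- (ldot xm xp))⁻¹ • lcross xm xp) xm xp := by
  have hm : ldot xm xp < 0 := ldot_null_neg hxm hxp hne
  have hmne : ldot xm xp ≠ 0 := ne_of_lt hm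
  set m := ldot xm xp with hmm
  have hnorm : ldot (lcross xm xp) (lcross xm xp) = m^2 := by
    have h0 : ldot xm xm = 0 := hxm.1
    have h1 : ldot xp xp = 0 := hxp.1
    simp only [ldot, lcross, hmm] at h0 h1 ⊢
    simp at h0 h1 ⊢
    nlinarith [h0, h1]
  have hsmul : ∀ (c : ℝ) (w v : Fin 3 → ℝ), ldot v (c • w) = c * ldot v w := by
    intro c w v; simp only [ldot, Pi.smul_apply, smul_eq_mul]; ring
  have hsmul2 : ∀ (c : ℝ) (w v : Fin 3 → ℝ), ldot (c • w) v = c * ldot w v := by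
    intro c w v; simp only [ldot, Pi.smul_apply, smul_eq_mul]; ring
  have hdet3smul : ∀ (c : ℝ) (w x y : Fin 3 → ℝ), det3 (c • w) x y = c * det3 w x y := by
    intro c w x y; simp only [det3_eq, Pi.smul_apply, smul_eq_mul]; ring
  refine ⟨?_, hxm, hxp, ?_, ?_, ?_⟩
  · rw [hsmul, hsmul2, hnorm]
    field_simp
  · rw [hsmul, ldot_lcross]
    have h : det3 xm xm xp = 0 := by simp only [det3_eq]; ring
    rw [h]; ring
  · rw [hsmul, ldot_lcross]
    have h : det3 xp xm xp = 0 := by simp only [det3_eq]; ring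
    rw [h]; ring
  · rw [hdet3smul]
    have h : det3 (lcross xm xp) xm xp = ldot (lcross xm xp) (lcross xm xp) := by
      rw [← ldot_lcross]
    rw [h, hnorm]
    have hmpos : (0:ℝ) < -m := by linarith
    have h2 : (-m)⁻¹ * m^2 = -m := by field_simp
    rw [h2]; linarith

/-- membership in coneC in terms of determinants, given disjoint arcs. -/
lemma coneC_iff_det {Um Up : Set (Fin 3 → ℝ)} (hUm : ∀ x ∈ Um, FutureUnitNull x)
    (hUp : ∀ x ∈ Up, FutureUnitNull x) (hdisj : Disjoint Um Up) (v : Fin 3 → ℝ) :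
    v ∈ coneC Um Up ↔ ∀ xm ∈ Um, ∀ xp ∈ Up, 0 < det3 v xm xp := by
  constructor
  · intro hv xm hxm xp hxp
    have hfm := hUm xm hxm
    have hfp := hUp xp hxp
    have hne : xm ≠ xp := by
      intro h; exact Set.disjoint_left.mp hdisj hxm (h ▸ hxp)
    have hframe := frame_exists hfm hfp hne
    have hpos := hv _ _ _ hframe hxm hxp
    obtain ⟨heq, hm⟩ := frame_eval hframe v
    nlinarith
  · intro hv u xm xp hframe hxm hxp
    obtain ⟨heq, hm⟩ := frame_eval hframe v
    have := hv xm hxm xp hxp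
    nlinarith

lemma det3_comb (c1 c2 c3 c4 : ℝ) (w1 w2 w3 w4 x y : Fin 3 → ℝ) :
    det3 (c1 • w1 + c2 • w2 + c3 • (-w3) + c4 • (-w4)) x y
      = c1 * det3 w1 x y + c2 * det3 w2 x y - c3 * det3 w3 x y - c4 * det3 w4 x y := by
  simp only [det3_eq, Pi.add_apply, Pi.smul_apply, Pi.neg_apply, smul_eq_mul]; ring

lemma self_mem_arc_left {a b : Fin 3 → ℝ} (ha : FutureUnitNull a) : a ∈ arc a b := by
  refine ⟨ha, ?_⟩
  rw [ldot_lcross]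
  have : det3 a a b = 0 := by simp only [det3_eq]; ring
  rw [this]

lemma self_mem_arc_right {a b : Fin 3 → ℝ} (hb : FutureUnitNull b) : b ∈ arc a b := by
  refine ⟨hb, ?_⟩
  rw [ldot_lcross]
  have : det3 b a b = 0 := by simp only [det3_eq]; ring
  rw [this]

lemma pluck1 (v am bm ap bp : Fin 3 → ℝ) :
    det3 v ap bp * det3 bm am bp + det3 v bm bp * det3 am ap bp
      - det3 v am bp * det3 bm ap bp = 0 := by
  simp only [det3_eq]; ring

lemma pluck2 (v am bm ap bp : Fin 3 → ℝ) :
    det3 v ap bp * det3 bm am ap + det3 v bm ap * det3 am ap bp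
      - det3 v am ap * det3 bm ap bp = 0 := by
  simp only [det3_eq]; ring

set_option maxHeartbeats 1000000 in
/-- C(U⁻, U⁺) is the cone of positive linear combinations of x⁺(U⁻), x⁻(U⁺), -x⁺(U⁺)
and -x⁻(U⁻).  Here U⁻ = arc am bm and U⁺ = arc ap bp, so x⁻(U⁻) = am, x⁺(U⁻) = bm,
x⁻(U⁺) = ap, x⁺(U⁺) = bp. -/
theorem stmt_13 (am bm ap bp : Fin 3 → ℝ)
    (ham : FutureUnitNull am) (hbm : FutureUnitNull bm)
    (hap : FutureUnitNull ap) (hbp : FutureUnitNull bp)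
    (hntm : am ≠ bm) (hntp : ap ≠ bp)
    (hdisj : Disjoint (arc am bm) (arc ap bp)) :
    coneC (arc am bm) (arc ap bp) =
      {v : Fin 3 → ℝ | ∃ c1 c2 c3 c4 : ℝ, 0 < c1 ∧ 0 < c2 ∧ 0 < c3 ∧ 0 < c4 ∧
        v = c1 • bm + c2 • ap + c3 • (-bp) + c4 • (-am)} := by
  have hπ := Real.pi_pos
  have hKpos : (0:ℝ) < ((Real.sqrt 2)⁻¹)^3 := by positivity
  -- angle coordinates for the four boundary rays
  obtain ⟨βm, hbm_pt⟩ := pt_exists bm hbm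
  obtain ⟨θa, ham_pt0⟩ := pt_exists am ham
  obtain ⟨αm, hαm_eq, hαm1, hαm2⟩ := reduce_angle θa βm
  have ham_pt : am = pt αm := by rw [ham_pt0, ← hαm_eq]
  have hβmαm : βm < αm := by
    rcases eq_or_lt_of_le hαm1 with h | h
    · exfalso; apply hntm; rw [ham_pt, hbm_pt, ← h]
    · exact h
  obtain ⟨θb, hbp_pt0⟩ := pt_exists bp hbp
  obtain ⟨βp, hβp_eq, hβp1, hβp2⟩ := reduce_angle θb βm
  have hbp_pt : bp = pt βp := by rw [hbp_pt0, ← hβp_eq]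
  have hbp_notin : bp ∉ arc am bm :=
    fun h => Set.disjoint_left.mp hdisj h (self_mem_arc_right hbp)
  have hαmβp : αm < βp := by
    by_contra h
    push_neg at h
    apply hbp_notin
    rw [hbp_pt, ham_pt, hbm_pt]
    exact (arc_mem_iff (by linarith) (by linarith) hβp1 hβp2).mpr h
  obtain ⟨θc, hap_pt0⟩ := pt_exists ap hap
  obtain ⟨αp, hαp_eq, hαp1, hαp2⟩ := reduce_angle θc βp
  have hap_pt : ap = pt αp := by rw [hap_pt0, ← hαp_eq]
  have hβpαp : βp < αp := by
    rcases eq_or_lt_of_le hαp1 with h | h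
    · exfalso; apply hntp; rw [hap_pt, hbp_pt, ← h]
    · exact h
  have hbm_notin : bm ∉ arc ap bp :=
    fun h => Set.disjoint_left.mp hdisj (self_mem_arc_right hbm) h
  have hαp2π : αp < βm + 2*Real.pi := by
    by_contra h
    push_neg at h
    apply hbm_notin
    have hper : pt (βm + 2*Real.pi) = pt βm := by
      have h' := pt_sub_period (βm + 2*Real.pi) 1
      norm_num at h'
      exact h'.symm
    rw [hbm_pt, ← hper, hap_pt, hbp_pt]
    exact (arc_mem_iff (by linarith) (by linarith) (by linarith) (by linarith)).mpr h
  -- extraction of angles for arc members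
  have hUmext : ∀ x ∈ arc am bm, ∃ θ, x = pt θ ∧ βm ≤ θ ∧ θ ≤ αm := by
    intro x hx
    obtain ⟨θ0, hx0⟩ := pt_exists x hx.1
    obtain ⟨θ, hθeq, hθ1, hθ2⟩ := reduce_angle θ0 βm
    have hxpt : x = pt θ := by rw [hx0, ← hθeq]
    have hmem : pt θ ∈ arc (pt αm) (pt βm) := by rw [← hxpt, ← ham_pt, ← hbm_pt]; exact hx
    exact ⟨θ, hxpt, hθ1, (arc_mem_iff (by linarith) (by linarith) hθ1 hθ2).mp hmem⟩
  have hUpext : ∀ x ∈ arc ap bp, ∃ θ, x = pt θ ∧ βp ≤ θ ∧ θ ≤ αp := by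
    intro x hx
    obtain ⟨θ0, hx0⟩ := pt_exists x hx.1
    obtain ⟨θ, hθeq, hθ1, hθ2⟩ := reduce_angle θ0 βp
    have hxpt : x = pt θ := by rw [hx0, ← hθeq]
    have hmem : pt θ ∈ arc (pt αp) (pt βp) := by rw [← hxpt, ← hap_pt, ← hbp_pt]; exact hx
    exact ⟨θ, hxpt, hθ1, (arc_mem_iff (by linarith) (by linarith) hθ1 hθ2).mp hmem⟩
  -- corner determinant signs
  have hA : det3 am ap bp < 0 := by
    rw [ham_pt, hap_pt, hbp_pt, det3_pt]
    have s1 : 0 < Real.sin ((αp - αm)/2) := sinh_pos (by linarith) (by linarith)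
    have s2 : Real.sin ((βp - αp)/2) < 0 := sinh_neg (by linarith) (by linarith)
    have s3 : 0 < Real.sin ((βp - αm)/2) := sinh_pos (by linarith) (by linarith)
    nlinarith [mul_neg_of_pos_of_neg (mul_pos (mul_pos hKpos s1) s3) s2]
  have hB : 0 < det3 bm am bp := by
    rw [hbm_pt, ham_pt, hbp_pt, det3_pt]
    have s1 : 0 < Real.sin ((αm - βm)/2) := sinh_pos (by linarith) (by linarith)
    have s2 : 0 < Real.sin ((βp - αm)/2) := sinh_pos (by linarith) (by linarith)
    have s3 : 0 < Real.sin ((βp - βm)/2) := sinh_pos (by linarith) (by linarith)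
    nlinarith [mul_pos (mul_pos (mul_pos hKpos s1) s2) s3]
  have hC : 0 < det3 bm am ap := by
    rw [hbm_pt, ham_pt, hap_pt, det3_pt]
    have s1 : 0 < Real.sin ((αm - βm)/2) := sinh_pos (by linarith) (by linarith)
    have s2 : 0 < Real.sin ((αp - αm)/2) := sinh_pos (by linarith) (by linarith)
    have s3 : 0 < Real.sin ((αp - βm)/2) := sinh_pos (by linarith) (by linarith)
    nlinarith [mul_pos (mul_pos (mul_pos hKpos s1) s2) s3]
  have hD : det3 bm ap bp < 0 := by
    rw [hbm_pt, hap_pt, hbp_pt, det3_pt]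
    have s1 : 0 < Real.sin ((αp - βm)/2) := sinh_pos (by linarith) (by linarith)
    have s2 : Real.sin ((βp - αp)/2) < 0 := sinh_neg (by linarith) (by linarith)
    have s3 : 0 < Real.sin ((βp - βm)/2) := sinh_pos (by linarith) (by linarith)
    nlinarith [mul_neg_of_pos_of_neg (mul_pos (mul_pos hKpos s1) s3) s2]
  have hDne : det3 bm ap bp ≠ 0 := ne_of_lt hD
  have hUmf : ∀ x ∈ arc am bm, FutureUnitNull x := fun x hx => hx.1
  have hUpf : ∀ x ∈ arc ap bp, FutureUnitNull x := fun x hx => hx.1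
  ext v
  rw [coneC_iff_det hUmf hUpf hdisj v, Set.mem_setOf_eq]
  constructor
  · -- hard direction: the determinant conditions give the positive combination
    intro hv
    have hamUm : am ∈ arc am bm := self_mem_arc_left ham
    have hbmUm : bm ∈ arc am bm := self_mem_arc_right hbm
    have hapUp : ap ∈ arc ap bp := self_mem_arc_left hap
    have hbpUp : bp ∈ arc ap bp := self_mem_arc_right hbp
    have P1 : 0 < det3 v am ap := hv am hamUm ap hapUp
    have P2 : 0 < det3 v am bp := hv am hamUm bp hbpUp
    have P3 : 0 < det3 v bm ap := hv bm hbmUm ap hapUp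
    have P4 : 0 < det3 v bm bp := hv bm hbmUm bp hbpUp
    have hLU1 : det3 v ap bp / (- det3 am ap bp) < det3 v bm bp / det3 bm am bp := by
      rw [div_lt_div_iff₀ (by linarith) hB]
      have hpl := pluck1 v am bm ap bp
      nlinarith [mul_neg_of_pos_of_neg P2 hD]
    have hLU2 : det3 v ap bp / (- det3 am ap bp) < det3 v bm ap / det3 bm am ap := by
      rw [div_lt_div_iff₀ (by linarith) hC]
      have hpl := pluck2 v am bm ap bp
      nlinarith [mul_neg_of_pos_of_neg P1 hD]
    have hU1pos : 0 < det3 v bm bp / det3 bm am bp := div_pos P4 hB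
    have hU2pos : 0 < det3 v bm ap / det3 bm am ap := div_pos P3 hC
    set L := det3 v ap bp / (- det3 am ap bp) with hL
    set U1 := det3 v bm bp / det3 bm am bp with hU1
    set U2 := det3 v bm ap / det3 bm am ap with hU2
    set c4 := (max L 0 + min U1 U2) / 2 with hc4def
    have hmaxmin : max L 0 < min U1 U2 := max_lt (lt_min hLU1 hLU2) (lt_min hU1pos hU2pos)
    have hc4pos : 0 < c4 := by
      have := le_max_right L 0; rw [hc4def]; linarith
    have hc4L : L < c4 := by
      have := le_max_left L 0; rw [hc4def]; linarith
    have hc4U1 : c4 < U1 := by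
      have := min_le_left U1 U2; rw [hc4def]; linarith
    have hc4U2 : c4 < U2 := by
      have := min_le_right U1 U2; rw [hc4def]; linarith
    have hn1 : det3 v ap bp + c4 * det3 am ap bp < 0 := by
      rw [hL] at hc4L
      have := (div_lt_iff₀ (show (0:ℝ) < - det3 am ap bp by linarith)).mp hc4L
      linarith
    have hn2 : - det3 v bm bp + c4 * det3 bm am bp < 0 := by
      rw [hU1] at hc4U1
      have := (lt_div_iff₀ hB).mp hc4U1
      linarith
    have hn3 : 0 < det3 v bm ap - c4 * det3 bm am ap := by
      rw [hU2] at hc4U2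
      have := (lt_div_iff₀ hC).mp hc4U2
      linarith
    refine ⟨(det3 v ap bp + c4 * det3 am ap bp)/det3 bm ap bp,
        (- det3 v bm bp + c4 * det3 bm am bp)/det3 bm ap bp,
        (det3 v bm ap - c4 * det3 bm am ap)/(- det3 bm ap bp),
        c4, div_pos_of_neg_of_neg hn1 hD, div_pos_of_neg_of_neg hn2 hD,
        div_pos hn3 (by linarith), hc4pos, ?_⟩
    have k0 : v 0 = ((det3 v ap bp + c4 * det3 am ap bp)/det3 bm ap bp) * bm 0
        + ((- det3 v bm bp + c4 * det3 bm am bp)/det3 bm ap bp) * ap 0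
        + ((det3 v bm ap - c4 * det3 bm am ap)/(- det3 bm ap bp)) * (-(bp 0))
        + c4 * (-(am 0)) := by
      field_simp
      simp only [det3_eq]
      ring
    have k1 : v 1 = ((det3 v ap bp + c4 * det3 am ap bp)/det3 bm ap bp) * bm 1
        + ((- det3 v bm bp + c4 * det3 bm am bp)/det3 bm ap bp) * ap 1
        + ((det3 v bm ap - c4 * det3 bm am ap)/(- det3 bm ap bp)) * (-(bp 1))
        + c4 * (-(am 1)) := by
      field_simp
      simp only [det3_eq]
      ring
    have k2 : v 2 = ((det3 v ap bp + c4 * det3 am ap bp)/det3 bm ap bp) * bm 2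
        + ((- det3 v bm bp + c4 * det3 bm am bp)/det3 bm ap bp) * ap 2
        + ((det3 v bm ap - c4 * det3 bm am ap)/(- det3 bm ap bp)) * (-(bp 2))
        + c4 * (-(am 2)) := by
      field_simp
      simp only [det3_eq]
      ring
    funext i
    simp only [Pi.add_apply, Pi.smul_apply, Pi.neg_apply, smul_eq_mul]
    fin_cases i
    · exact k0
    · exact k1
    · exact k2
  · -- easy direction: a positive combination satisfies the determinant conditions
    rintro ⟨c1, c2, c3, c4, h1, h2, h3, h4, hveq⟩ xm hxm xp hxp
    obtain ⟨θm, hxm_pt, hθm1, hθm2⟩ := hUmext xm hxm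
    obtain ⟨θp, hxp_pt, hθp1, hθp2⟩ := hUpext xp hxp
    rw [hveq, det3_comb]
    have hmid : 0 < Real.sin ((θp - θm)/2) := sinh_pos (by linarith) (by linarith)
    have hDbm : 0 ≤ det3 bm xm xp ∧ (βm < θm → 0 < det3 bm xm xp) := by
      rw [hbm_pt, hxm_pt, hxp_pt, det3_pt]
      have s3 : 0 < Real.sin ((θp - βm)/2) := sinh_pos (by linarith) (by linarith)
      constructor
      · have s1 : 0 ≤ Real.sin ((θm - βm)/2) := sinh_nonneg (by linarith) (by linarith)
        nlinarith [mul_nonneg (mul_nonneg (le_of_lt hKpos) s1) (le_of_lt (mul_pos hmid s3))]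
      · intro hlt
        have s1 : 0 < Real.sin ((θm - βm)/2) := sinh_pos (by linarith) (by linarith)
        nlinarith [mul_pos (mul_pos hKpos s1) (mul_pos hmid s3)]
    have hDap : 0 ≤ det3 ap xm xp := by
      rw [hap_pt, hxm_pt, hxp_pt, det3_pt]
      have s1 : Real.sin ((θm - αp)/2) < 0 := sinh_neg (by linarith) (by linarith)
      have s3 : Real.sin ((θp - αp)/2) ≤ 0 := sinh_nonpos (by linarith) (by linarith)
      have h13 : 0 ≤ Real.sin ((θm - αp)/2) * Real.sin ((θp - αp)/2) := by nlinarith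
      nlinarith [mul_nonneg (le_of_lt (mul_pos hKpos hmid)) h13]
    have hDbp : det3 bp xm xp ≤ 0 := by
      rw [hbp_pt, hxm_pt, hxp_pt, det3_pt]
      have s1 : Real.sin ((θm - βp)/2) < 0 := sinh_neg (by linarith) (by linarith)
      have s3 : 0 ≤ Real.sin ((θp - βp)/2) := sinh_nonneg (by linarith) (by linarith)
      have h13 : Real.sin ((θm - βp)/2) * Real.sin ((θp - βp)/2) ≤ 0 := by nlinarith
      nlinarith [mul_nonpos_of_nonneg_of_nonpos (le_of_lt (mul_pos hKpos hmid)) h13]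
    have hDam : det3 am xm xp ≤ 0 ∧ (θm < αm → det3 am xm xp < 0) := by
      rw [ham_pt, hxm_pt, hxp_pt, det3_pt]
      have s3 : 0 < Real.sin ((θp - αm)/2) := sinh_pos (by linarith) (by linarith)
      constructor
      · have s1 : Real.sin ((θm - αm)/2) ≤ 0 := sinh_nonpos (by linarith) (by linarith)
        nlinarith [mul_nonpos_of_nonpos_of_nonneg s1 (le_of_lt (mul_pos hmid s3)),
          mul_pos hKpos (mul_pos hmid s3)]
      · intro hlt
        have s1 : Real.sin ((θm - αm)/2) < 0 := sinh_neg (by linarith) (by linarith)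
        nlinarith [mul_neg_of_neg_of_pos s1 (mul_pos hmid s3), mul_pos hKpos (mul_pos hmid s3)]
    have t1 : 0 ≤ c1 * det3 bm xm xp := mul_nonneg (le_of_lt h1) hDbm.1
    have t2 : 0 ≤ c2 * det3 ap xm xp := mul_nonneg (le_of_lt h2) hDap
    have t3 : c3 * det3 bp xm xp ≤ 0 := mul_nonpos_of_nonneg_of_nonpos (le_of_lt h3) hDbp
    have t4 : c4 * det3 am xm xp ≤ 0 := mul_nonpos_of_nonneg_of_nonpos (le_of_lt h4) hDam.1
    rcases lt_or_eq_of_le hθm2 with hcase | hcase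
    · have := hDam.2 hcase
      nlinarith [mul_pos h4 (show (0:ℝ) < - det3 am xm xp by linarith)]
    · have hbmlt : βm < θm := by rw [hcase]; exact hβmαm
      have := hDbm.2 hbmlt
      nlinarith [mul_pos h1 this]
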